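/- Let d ≥ 2 and define the coherence-generating power C_p(U) = 1 − (1/d) Σ_{i,j} |U_{ij}|^4 of a d×d unitary and C̄ = (d−1)/(d+1). Then for any two d×d unitaries U and V, with F = P_π D a random free unitary (π uniform on S_d and D a Haar-random diagonal unitary, independent): E_F[ C_p(V F U) ] = C_p(U) + C_p(V) − C_p(U)·C_p(V)/C̄. -/

import Mathlib

open Matrix MeasureTheory
open scoped Kronecker

noncomputable section

/-- The permutation matrix of `π`: `P_π |k⟩ = |π(k)⟩`. -/
def Pm {d : ℕ} (π : Equiv.Perm (Fin d)) : Matrix (Fin d) (Fin d) ℂ :=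
  fun i j => if i = π j then 1 else 0

/-- The box `[0, 2π)^d` of phase vectors. -/
def box (d : ℕ) : Set (Fin d → ℝ) := Set.univ.pi fun _ => Set.Ico (0 : ℝ) (2 * Real.pi)

/-- The diagonal unitary `D = Σ_k e^{iφ_k} |k⟩⟨k|`. -/
def Dm {d : ℕ} (φ : Fin d → ℝ) : Matrix (Fin d) (Fin d) ℂ :=
  Matrix.diagonal fun k => Complex.exp (Complex.I * (φ k : ℂ))

/-- The linear coherence-generating power `C_p(U) = 1 − (1/d) Σ_{i,j} |U_{ij}|⁴`. -/
def Cp {d : ℕ} (U : Matrix (Fin d) (Fin d) ℂ) : ℂ :=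
  1 - (d : ℂ)⁻¹ * ∑ i : Fin d, ∑ j : Fin d, (((‖U i j‖ : ℝ) : ℂ)) ^ 4

/-- `C̄ = (d−1)/(d+1)`, the Haar-averaged coherence-generating power. -/
def Cbar (d : ℕ) : ℂ := ((d : ℂ) - 1) / ((d : ℂ) + 1)

/-!
Write `(V P_π D U)ᵢⱼ = ∑ₖ V_{i,πk} U_{kj} e^{iφₖ}`. Averaging `|·|⁴` over the independent phases
kills every term of the fourfold expansion except the two pairings `{k, m} = {l, n}`, which leaves
`2 (∑ₖ xₖ)² - ∑ₖ xₖ²` with `xₖ = |V_{i,πk}|² |U_{kj}|²`. The average over `π` then only involves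
the first two moments of a row of `|V|²` and of a column of `|U|²` (both of sum `1` by unitarity)
under a uniformly random permutation: `𝔼 x_{πk}² = (∑ x²)/d` and, for `k ≠ m`,
`𝔼 x_{πk} x_{πm} = (1 - ∑ x²)/(d (d - 1))`. Summing over `i, j` expresses the result through
`∑ |V_{ij}|⁴ = d (1 - C_p(V))` and `∑ |U_{ij}|⁴ = d (1 - C_p(U))`.
-/

open Finset hiding box
open Complex ComplexConjugate

theorem Finset.sq_sum_eq_sum_sq_add_sum_offDiag {ι R : Type*} [DecidableEq ι] [CommSemiring R]
    (s : Finset ι) (f : ι → R) :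
    (∑ i ∈ s, f i) ^ 2 = ∑ i ∈ s, f i ^ 2 + ∑ x ∈ s.offDiag, f x.1 * f x.2 := by
  rw [sq, sum_mul_sum, ← sum_product', ← diag_union_offDiag, sum_union (disjoint_diag_offDiag s),
    diag, sum_map]
  simp [sq]

theorem Finset.natCast_card_univ_offDiag {α R : Type*} [Fintype α] [DecidableEq α] [CommRing R] :
    (#(univ : Finset α).offDiag : R) = Fintype.card α * (Fintype.card α - 1) := by
  rw [offDiag_card, Finset.card_univ, Nat.cast_sub (Nat.le_mul_self _)]
  push_cast
  ring

theorem Finset.card_smul_sum_smul_eq_card_smul_sum {G β M : Type*} [Group G] [Fintype G]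
    [MulAction G β] [AddCommMonoid M] {s : Finset β} (hs : ∀ g : G, ∀ y ∈ s, g • y ∈ s)
    {x : β} (hx : ∀ y ∈ s, ∃ g : G, g • x = y) (F : β → M) :
    #s • ∑ g : G, F (g • x) = Fintype.card G • ∑ y ∈ s, F y := by
  calc #s • ∑ g : G, F (g • x)
      = ∑ y ∈ s, ∑ g : G, F (g • y) := by
        rw [← sum_const]
        refine sum_congr rfl fun y hy => ?_
        obtain ⟨h, rfl⟩ := hx y hy
        simp_rw [smul_smul]
        exact (Fintype.sum_equiv (Equiv.mulRight h) _ _ fun _ => rfl).symm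
    _ = ∑ g : G, ∑ y ∈ s, F (g • y) := sum_comm
    _ = ∑ g : G, ∑ y ∈ s, F y := by
        refine sum_congr rfl fun g _ => ?_
        exact sum_nbij' (g • ·) (g⁻¹ • ·) (hs g) (hs g⁻¹) (fun y _ => inv_smul_smul g y)
          (fun y _ => smul_inv_smul g y) fun _ _ => rfl
    _ = Fintype.card G • ∑ y ∈ s, F y := by rw [sum_const, Finset.card_univ]

namespace Equiv.Perm

open Nat

variable {α M : Type*} [Fintype α] [DecidableEq α] [AddCommMonoid M]

theorem card_smul_sum_apply (g : α → M) (k : α) :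
    Fintype.card α • ∑ π : Perm α, g (π k) = (Fintype.card α)! • ∑ a, g a := by
  rw [← Fintype.card_perm, ← Finset.card_univ]
  exact card_smul_sum_smul_eq_card_smul_sum (fun _ _ _ => mem_univ _)
    (fun y _ => ⟨swap k y, swap_apply_left k y⟩) g

theorem card_offDiag_smul_sum_apply_apply (h : α → α → M) {k m : α} (hkm : k ≠ m) :
    #(univ : Finset α).offDiag • ∑ π : Perm α, h (π k) (π m) =
      (Fintype.card α)! • ∑ x ∈ (univ : Finset α).offDiag, h x.1 x.2 := by
  rw [← Fintype.card_perm]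
  refine card_smul_sum_smul_eq_card_smul_sum (x := (k, m)) (fun π y hy => ?_) (fun y hy => ?_)
    (fun y => h y.1 y.2)
  · simpa [mem_offDiag] using hy
  · obtain ⟨π, hπk, hπm⟩ := MulAction.is_two_pretransitive_iff.mp
      (isMultiplyPretransitive α 2) hkm (mem_offDiag.mp hy).2.2
    exact ⟨π, by simp [hπk, hπm]⟩

variable {R : Type*} [CommRing R]

theorem card_mul_sum_sum_apply_sq_mul_sq (x y : α → R) :
    (Fintype.card α : R) * ∑ π : Perm α, ∑ k, x (π k) ^ 2 * y k ^ 2 =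
      (Fintype.card α)! * ((∑ a, x a ^ 2) * ∑ a, y a ^ 2) := by
  have hk (k : α) :
      (Fintype.card α : R) * ∑ π : Perm α, x (π k) ^ 2 = (Fintype.card α)! * ∑ a, x a ^ 2 := by
    simpa only [nsmul_eq_mul] using card_smul_sum_apply (fun a => x a ^ 2) k
  calc (Fintype.card α : R) * ∑ π : Perm α, ∑ k, x (π k) ^ 2 * y k ^ 2
      = ∑ k, ((Fintype.card α : R) * ∑ π : Perm α, x (π k) ^ 2) * y k ^ 2 := by
        simp only [sum_comm (γ := α), mul_sum, sum_mul, mul_assoc]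
    _ = _ := by rw [← mul_assoc, mul_sum]; simp only [hk]

theorem card_mul_pred_mul_sum_sq_sum_apply_mul (x y : α → R) :
    (Fintype.card α : R) * (Fintype.card α - 1) * ∑ π : Perm α, (∑ k, x (π k) * y k) ^ 2 =
      (Fintype.card α)! * ((Fintype.card α - 1) * (∑ a, x a ^ 2) * (∑ a, y a ^ 2) +
        ((∑ a, x a) ^ 2 - ∑ a, x a ^ 2) * ((∑ a, y a) ^ 2 - ∑ a, y a ^ 2)) := by
  have hoffDiag (z : α → R) :
      ∑ p ∈ (univ : Finset α).offDiag, z p.1 * z p.2 = (∑ a, z a) ^ 2 - ∑ a, z a ^ 2 := by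
    rw [sq_sum_eq_sum_sq_add_sum_offDiag]
    ring
  have hpair (p : α × α) (hp : p ∈ (univ : Finset α).offDiag) :
      (Fintype.card α : R) * (Fintype.card α - 1) * ∑ π : Perm α, x (π p.1) * x (π p.2) =
        (Fintype.card α)! * ∑ q ∈ (univ : Finset α).offDiag, x q.1 * x q.2 := by
    rw [← natCast_card_univ_offDiag]
    simpa only [nsmul_eq_mul] using
      card_offDiag_smul_sum_apply_apply (fun a b => x a * x b) (mem_offDiag.mp hp).2.2
  have hsplit (π : Perm α) : (∑ k, x (π k) * y k) ^ 2 = ∑ k, x (π k) ^ 2 * y k ^ 2 +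
      ∑ p ∈ (univ : Finset α).offDiag, x (π p.1) * x (π p.2) * (y p.1 * y p.2) := by
    rw [sq_sum_eq_sum_sq_add_sum_offDiag]
    simp only [mul_pow, mul_mul_mul_comm]
  have hoff : (Fintype.card α : R) * (Fintype.card α - 1) *
      ∑ π : Perm α, ∑ p ∈ (univ : Finset α).offDiag, x (π p.1) * x (π p.2) * (y p.1 * y p.2) =
      (Fintype.card α)! * (((∑ a, x a) ^ 2 - ∑ a, x a ^ 2) * ((∑ a, y a) ^ 2 - ∑ a, y a ^ 2)) := by
    rw [sum_comm, mul_sum, ← hoffDiag, ← hoffDiag, mul_sum, mul_sum]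
    refine sum_congr rfl fun p hp => ?_
    rw [← sum_mul, ← mul_assoc, hpair p hp, mul_assoc]
  rw [sum_congr rfl fun π _ => hsplit π, sum_add_distrib]
  linear_combination (Fintype.card α - 1 : R) * card_mul_sum_sum_apply_sq_mul_sq x y + hoff

theorem card_mul_pred_mul_sum_two_sq_sub_of_sum_eq_one {x y : α → R} (hx : ∑ a, x a = 1)
    (hy : ∑ a, y a = 1) :
    (Fintype.card α : R) * (Fintype.card α - 1) *
        ∑ π : Perm α, (2 * (∑ k, x (π k) * y k) ^ 2 - ∑ k, x (π k) ^ 2 * y k ^ 2) =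
      (Fintype.card α)! * ((Fintype.card α - 1) * (∑ a, x a ^ 2) * (∑ a, y a ^ 2) +
        2 * (1 - ∑ a, x a ^ 2) * (1 - ∑ a, y a ^ 2)) := by
  have hsq := card_mul_pred_mul_sum_sq_sum_apply_mul x y
  rw [hx, hy, one_pow] at hsq
  rw [sum_sub_distrib, ← mul_sum]
  linear_combination 2 * hsq - (Fintype.card α - 1 : R) * card_mul_sum_sum_apply_sq_mul_sq x y

theorem card_mul_pred_mul_sum_sum_sum_two_sq_sub {ι κ : Type*} [Fintype ι] [Fintype κ]
    {a : ι → α → R} {b : α → κ → R} (ha : ∀ i, ∑ p, a i p = 1) (hb : ∀ j, ∑ k, b k j = 1) :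
    (Fintype.card α : R) * (Fintype.card α - 1) * ∑ π : Perm α, ∑ i, ∑ j,
        (2 * (∑ k, a i (π k) * b k j) ^ 2 - ∑ k, a i (π k) ^ 2 * b k j ^ 2) =
      (Fintype.card α)! * ((Fintype.card α - 1) * (∑ i, ∑ p, a i p ^ 2) * (∑ j, ∑ k, b k j ^ 2) +
        2 * (Fintype.card ι - ∑ i, ∑ p, a i p ^ 2) * (Fintype.card κ - ∑ j, ∑ k, b k j ^ 2)) := by
  have hsum (X : ι → R) (Y : κ → R) (c e f : R) :
      ∑ i, ∑ j, f * (c * X i * Y j + e * (1 - X i) * (1 - Y j)) =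
        f * (c * (∑ i, X i) * (∑ j, Y j) +
          e * (Fintype.card ι - ∑ i, X i) * (Fintype.card κ - ∑ j, Y j)) := by
    simp only [mul_add, sum_add_distrib, ← mul_sum, mul_assoc, ← sum_mul, sum_sub_distrib,
      sum_const, Finset.card_univ, nsmul_eq_mul, mul_one]
  calc _ = ∑ i, ∑ j, (Fintype.card α : R) * (Fintype.card α - 1) * ∑ π : Perm α,
          (2 * (∑ k, a i (π k) * b k j) ^ 2 - ∑ k, a i (π k) ^ 2 * b k j ^ 2) := by
        rw [sum_comm, mul_sum]
        exact sum_congr rfl fun i _ => by rw [sum_comm, mul_sum]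
    _ = _ := by
        simp only [card_mul_pred_mul_sum_two_sq_sub_of_sum_eq_one (ha _) (hb _)]
        exact hsum _ _ _ _ _

end Equiv.Perm

namespace Matrix

variable {n 𝕜 : Type*} [Fintype n] [DecidableEq n] [RCLike 𝕜]

theorem sum_norm_sq_row_eq_one {U : Matrix n n 𝕜} (hU : U ∈ unitaryGroup n 𝕜) (i : n) :
    ∑ j, ‖U i j‖ ^ 2 = 1 := by
  have h := congrFun (congrFun (mem_unitaryGroup_iff.mp hU) i) i
  simp only [mul_apply, star_apply, ← starRingEnd_apply, RCLike.mul_conj, one_apply_eq] at h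
  exact_mod_cast h

theorem sum_norm_sq_col_eq_one {U : Matrix n n 𝕜} (hU : U ∈ unitaryGroup n 𝕜) (j : n) :
    ∑ i, ‖U i j‖ ^ 2 = 1 := by
  have h := congrFun (congrFun (mem_unitaryGroup_iff'.mp hU) j) j
  simp only [mul_apply, star_apply, ← starRingEnd_apply, RCLike.conj_mul, one_apply_eq] at h
  exact_mod_cast h

end Matrix

theorem integral_Ico_exp_I_mul_int (n : ℤ) :
    ∫ x in Set.Ico 0 (2 * Real.pi), exp (I * n * x) =
      if n = 0 then ((2 * Real.pi : ℝ) : ℂ) else 0 := by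
  rw [Measure.restrict_congr_set Ico_ae_eq_Ioc,
    ← intervalIntegral.integral_of_le (by positivity : (0 : ℝ) ≤ 2 * Real.pi)]
  split_ifs with hn
  · simp [hn]
  · have hperiod : exp (I * n * (2 * Real.pi)) = 1 := by
      rw [show I * n * (2 * Real.pi) = n * (2 * Real.pi * I) by ring]
      exact exp_int_mul_two_pi_mul_I n
    rw [integral_exp_mul_complex (mul_ne_zero I_ne_zero (Int.cast_ne_zero.mpr hn))]
    simp [hperiod]

theorem volume_restrict_box (d : ℕ) :
    volume.restrict (box d) = Measure.pi fun _ => volume.restrict (Set.Ico 0 (2 * Real.pi)) := by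
  rw [box, volume_pi, Measure.restrict_pi_pi]

theorem integral_box_prod_exp {d : ℕ} (ν : Fin d → ℤ) :
    ∫ φ in box d, ∏ t, exp (I * ν t * φ t) =
      if ν = 0 then (((2 * Real.pi) ^ d : ℝ) : ℂ) else 0 := by
  rw [volume_restrict_box, integral_fintype_prod_eq_prod (fun t (x : ℝ) => exp (I * ν t * x))]
  simp only [integral_Ico_exp_I_mul_int]
  split_ifs with hν
  · simp [hν]
  · obtain ⟨t, ht⟩ := Function.ne_iff.mp hν
    exact prod_eq_zero (mem_univ t) (if_neg ht)

theorem Continuous.integrableOn_box {E : Type*} [NormedAddCommGroup E] {d : ℕ}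
    {f : (Fin d → ℝ) → E} (hf : Continuous f) : IntegrableOn f (box d) :=
  (hf.continuousOn.integrableOn_compact (isCompact_univ_pi fun _ => isCompact_Icc)).mono_set
    (Set.pi_mono fun _ _ => Set.Ico_subset_Icc_self)

theorem integral_box_exp_mul_conj_mul_exp_mul_conj {d : ℕ} (k l m n : Fin d) :
    ∫ φ in box d, exp (I * φ k) * conj (exp (I * φ l)) * (exp (I * φ m) * conj (exp (I * φ n))) =
      if k = l ∧ m = n ∨ k = n ∧ m = l then (((2 * Real.pi) ^ d : ℝ) : ℂ) else 0 := by
  -- the frequency vector of the integrand; it vanishes iff `{k, m} = {l, n}` as multisets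
  set ν : Fin d → ℤ := Pi.single k 1 + Pi.single m 1 - Pi.single l 1 - Pi.single n 1
  have hprod (φ : Fin d → ℝ) :
      exp (I * φ k) * conj (exp (I * φ l)) * (exp (I * φ m) * conj (exp (I * φ n))) =
        ∏ t, exp (I * ν t * φ t) := by
    rw [← exp_sum, ← Complex.exp_conj, ← Complex.exp_conj, ← exp_add, ← exp_add, ← exp_add]
    congr 1
    simp [ν, Pi.single_apply, mul_add, add_mul, sub_mul, mul_sub, sum_add_distrib,
      sum_sub_distrib]
    ring
  have hν : ν = 0 ↔ k = l ∧ m = n ∨ k = n ∧ m = l := by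
    simp only [ν]
    rw [sub_sub, sub_eq_zero, Pi.single_add_single_eq_single_add_single one_ne_zero one_ne_zero]
    simp
  simp_rw [hprod]
  rw [integral_box_prod_exp, if_congr hν rfl rfl]

theorem Finset.sum_ite_eq_and_eq_or_eq_and_eq {α M : Type*} [Fintype α] [DecidableEq α]
    [AddCommGroup M] (g : α → α → α → α → M) :
    ∑ k, ∑ l, ∑ m, ∑ n, (if k = l ∧ m = n ∨ k = n ∧ m = l then g k l m n else 0) =
      ∑ k, ∑ m, g k k m m + ∑ k, ∑ m, g k m m k - ∑ k, g k k k k := by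
  -- inclusion-exclusion: the two pairings overlap exactly when `k = l = m = n`
  have hsplit (k l m n : α) : (if k = l ∧ m = n ∨ k = n ∧ m = l then g k l m n else 0) =
      (if k = l ∧ m = n then g k l m n else 0) + (if k = n ∧ m = l then g k l m n else 0) -
        (if k = l ∧ m = l ∧ n = l then g k l m n else 0) := by
    split_ifs <;> grind
  simp only [hsplit, sum_add_distrib, sum_sub_distrib, ite_and]
  simp [sum_ite_irrel]

theorem integral_box_norm_sum_mul_exp_pow_four {d : ℕ} (c : Fin d → ℂ) :
    ∫ φ in box d, ‖∑ k, c k * exp (I * φ k)‖ ^ 4 =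
      (2 * Real.pi) ^ d * (2 * (∑ k, ‖c k‖ ^ 2) ^ 2 - ∑ k, (‖c k‖ ^ 2) ^ 2) := by
  have hexpand (φ : Fin d → ℝ) : ((‖∑ k, c k * exp (I * φ k)‖ ^ 4 : ℝ) : ℂ) =
      ∑ k, ∑ l, ∑ m, ∑ n, c k * conj (c l) * (c m * conj (c n)) *
        (exp (I * φ k) * conj (exp (I * φ l)) * (exp (I * φ m) * conj (exp (I * φ n)))) := by
    rw [show ‖∑ k, c k * exp (I * φ k)‖ ^ 4 = (‖∑ k, c k * exp (I * φ k)‖ ^ 2) ^ 2 by ring]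
    push_cast
    rw [← mul_conj', map_sum, sum_mul_sum, sq]
    simp only [sum_mul_sum]
    refine sum_congr rfl fun k _ => ?_
    conv_rhs => rw [sum_comm]
    refine sum_congr rfl fun m _ => sum_congr rfl fun l _ => sum_congr rfl fun n _ => ?_
    simp only [map_mul]
    ring
  apply ofReal_injective
  calc ((∫ φ in box d, ‖∑ k, c k * exp (I * φ k)‖ ^ 4 : ℝ) : ℂ)
      = ∑ k, ∑ l, ∑ m, ∑ n, (if k = l ∧ m = n ∨ k = n ∧ m = l then
          (((2 * Real.pi) ^ d : ℝ) : ℂ) * (c k * conj (c l) * (c m * conj (c n))) else 0) := by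
        rw [← integral_complex_ofReal]
        simp_rw [hexpand]
        rw [integral_finsetSum _ fun _ _ => Continuous.integrableOn_box (by fun_prop)]
        refine sum_congr rfl fun k _ => ?_
        rw [integral_finsetSum _ fun _ _ => Continuous.integrableOn_box (by fun_prop)]
        refine sum_congr rfl fun l _ => ?_
        rw [integral_finsetSum _ fun _ _ => Continuous.integrableOn_box (by fun_prop)]
        refine sum_congr rfl fun m _ => ?_
        rw [integral_finsetSum _ fun _ _ => Continuous.integrableOn_box (by fun_prop)]
        refine sum_congr rfl fun n _ => ?_
        rw [integral_const_mul, integral_box_exp_mul_conj_mul_exp_mul_conj, mul_ite, mul_zero,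
          mul_comm]
    _ = _ := by
        have hswap (k m : Fin d) : c k * conj (c m) * (c m * conj (c k)) =
            c k * conj (c k) * (c m * conj (c m)) := by ring
        rw [sum_ite_eq_and_eq_or_eq_and_eq]
        simp only [← mul_sum, ← sum_mul, hswap, mul_conj']
        push_cast
        simp only [← sq]
        ring

theorem volume_real_box (d : ℕ) : volume.real (box d) = (2 * Real.pi) ^ d := by
  simp [Measure.real, box, volume_pi_pi, Real.volume_Ico, Real.pi_nonneg]

theorem mul_Pm_mul_Dm_mul_apply {d : ℕ} (U V : Matrix (Fin d) (Fin d) ℂ) (π : Equiv.Perm (Fin d))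
    (φ : Fin d → ℝ) (i j : Fin d) :
    (V * (Pm π * Dm φ) * U) i j = ∑ k, V i (π k) * U k j * exp (I * φ k) := by
  have hPD (r k : Fin d) : (Pm π * Dm φ) r k = if r = π k then exp (I * φ k) else 0 := by
    simp [Dm, Pm, Matrix.mul_diagonal]
  rw [Matrix.mul_apply]
  simp only [Matrix.mul_apply (M := V), hPD, mul_ite, mul_zero, sum_ite_eq', mem_univ, if_true]
  exact sum_congr rfl fun k _ => by ring

theorem Cp_eq_ofReal {d : ℕ} (M : Matrix (Fin d) (Fin d) ℂ) :
    Cp M = ((1 - (d : ℝ)⁻¹ * ∑ i, ∑ j, ‖M i j‖ ^ 4 : ℝ) : ℂ) := by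
  simp [Cp]

theorem integral_box_Cp_mul_Pm_mul_Dm_mul {d : ℕ} (U V : Matrix (Fin d) (Fin d) ℂ)
    (π : Equiv.Perm (Fin d)) :
    ∫ φ in box d, Cp (V * (Pm π * Dm φ) * U) =
      (((2 * Real.pi) ^ d * (1 - (d : ℝ)⁻¹ * ∑ i, ∑ j,
        (2 * (∑ k, ‖V i (π k)‖ ^ 2 * ‖U k j‖ ^ 2) ^ 2 -
          ∑ k, (‖V i (π k)‖ ^ 2) ^ 2 * (‖U k j‖ ^ 2) ^ 2)) : ℝ) : ℂ) := by
  simp_rw [Cp_eq_ofReal, mul_Pm_mul_Dm_mul_apply]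
  rw [integral_complex_ofReal]
  congr 1
  rw [integral_sub continuous_const.integrableOn_box (Continuous.integrableOn_box (by fun_prop)),
    integral_const, integral_const_mul,
    integral_finsetSum _ fun _ _ => Continuous.integrableOn_box (by fun_prop)]
  have hrow (i : Fin d) : ∫ φ in box d, ∑ j, ‖∑ k, V i (π k) * U k j * exp (I * φ k)‖ ^ 4 =
      ∑ j, (2 * Real.pi) ^ d * (2 * (∑ k, ‖V i (π k)‖ ^ 2 * ‖U k j‖ ^ 2) ^ 2 -
        ∑ k, (‖V i (π k)‖ ^ 2) ^ 2 * (‖U k j‖ ^ 2) ^ 2) := by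
    rw [integral_finsetSum _ fun _ _ => Continuous.integrableOn_box (by fun_prop)]
    simp only [integral_box_norm_sum_mul_exp_pow_four, norm_mul, mul_pow]
  simp only [hrow]
  rw [measureReal_restrict_apply_univ, volume_real_box, smul_eq_mul, mul_one]
  simp only [← mul_sum]
  ring

/-- **Statement 18.** Effect of a random free unitary `F = P_π D` sandwiched between
two arbitrary unitaries on the coherence-generating power:
`E_F[C_p(V F U)] = C_p(U) + C_p(V) − C_p(U)C_p(V)/C̄`. -/
theorem coherence_sandwich (d : ℕ) (hd : 2 ≤ d)
    (U V : Matrix (Fin d) (Fin d) ℂ)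
    (hU : U ∈ Matrix.unitaryGroup (Fin d) ℂ) (hV : V ∈ Matrix.unitaryGroup (Fin d) ℂ) :
    ((Nat.factorial d : ℂ)⁻¹ *
        ∑ π : Equiv.Perm (Fin d),
          ((2 * Real.pi) ^ d)⁻¹ • ∫ φ in box d, Cp (V * (Pm π * Dm φ) * U)) =
      Cp U + Cp V - Cp U * Cp V / Cbar d := by
  have hd₀ : (d : ℂ) ≠ 0 := Nat.cast_ne_zero.mpr (by omega)
  have hd₁ : (d : ℂ) - 1 ≠ 0 := sub_ne_zero.mpr (Nat.cast_ne_one.mpr (by omega))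
  have hd₂ : (d : ℂ) + 1 ≠ 0 := Nat.cast_add_one_ne_zero d
  have hfact : (d.factorial : ℂ) ≠ 0 := Nat.cast_ne_zero.mpr d.factorial_ne_zero
  have hpi : (2 * Real.pi) ^ d ≠ 0 := by positivity
  have hperm := Equiv.Perm.card_mul_pred_mul_sum_sum_sum_two_sq_sub
    (a := fun i p => ‖V i p‖ ^ 2) (b := fun k j => ‖U k j‖ ^ 2)
    (Matrix.sum_norm_sq_row_eq_one hV) (Matrix.sum_norm_sq_col_eq_one hU)
  simp only [Fintype.card_fin, ← pow_mul, Nat.reduceMul] at hperm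
  rw [sum_comm (f := fun j k => ‖U k j‖ ^ 4)] at hperm
  replace hperm := congrArg (fun x : ℝ => (x : ℂ)) hperm
  push_cast at hperm
  simp only [integral_box_Cp_mul_Pm_mul_Dm_mul, Complex.real_smul, ← Complex.ofReal_mul,
    inv_mul_cancel_left₀ hpi, ← pow_mul, Nat.reduceMul]
  simp only [Cp_eq_ofReal, Cbar]
  push_cast
  rw [sum_sub_distrib, ← mul_sum, sum_const, Finset.card_univ, Fintype.card_perm,
    Fintype.card_fin, nsmul_eq_mul, mul_one]
  field_simp
  linear_combination -hperm
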